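/- Let I be a finite index set, let (f_α)_{α∈I} be ring homomorphisms A → B, let (n_α)_{α∈I} be integers, and let f : A → B be the ℚ-linear map f = Σ_{α∈I} n_α·f_α. Then for every a ∈ A the characteristic function of f is the rational function ∏_{α : n_α > 0}(1+f_α(a)T)^{n_α} / ∏_{α : n_α < 0}(1+f_α(a)T)^{−n_α}; precisely, in B[[T]] one has R(f,a) · ∏_{α : n_α < 0}(1+f_α(a)T)^{−n_α} = ∏_{α : n_α ≥ 0}(1+f_α(a)T)^{n_α}. -/

import Mathlib

open PowerSeries

noncomputable def logOneAdd {A : Type*} [CommRing A] [Algebra ℚ A] (a : A) : PowerSeries A :=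
  PowerSeries.mk fun k => ((-1 : ℚ) ^ (k + 1) / k) • a ^ k

noncomputable def mapCoeff {A B : Type*} [CommRing A] [CommRing B] [Algebra ℚ A] [Algebra ℚ B]
    (f : A →ₗ[ℚ] B) (p : PowerSeries A) : PowerSeries B :=
  PowerSeries.mk fun k => f (PowerSeries.coeff (R := A) k p)

noncomputable def expPS {B : Type*} [CommRing B] [Algebra ℚ B] (p : PowerSeries B) : PowerSeries B :=
  PowerSeries.mk fun k => ∑ m ∈ Finset.range (k + 1),
    ((m.factorial : ℚ)⁻¹) • PowerSeries.coeff (R := B) k (p ^ m)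

noncomputable def charFun {A B : Type*} [CommRing A] [CommRing B] [Algebra ℚ A] [Algebra ℚ B]
    (f : A →ₗ[ℚ] B) (a : A) : PowerSeries B :=
  expPS (mapCoeff f (logOneAdd a))

noncomputable def psi {A B : Type*} [CommRing A] [CommRing B] [Algebra ℚ A] [Algebra ℚ B]
    (f : A →ₗ[ℚ] B) (a : A) (k : ℕ) : B :=
  PowerSeries.coeff (R := B) k (charFun f a)

def IsNHom {A B : Type*} [CommRing A] [CommRing B] [Algebra ℚ A] [Algebra ℚ B]
    (f : A →ₗ[ℚ] B) (n : ℕ) : Prop :=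
  f 1 = n • (1 : B) ∧ ∀ k, n + 1 ≤ k → ∀ a : A, psi f a k = 0

noncomputable def frob {A B : Type*} [CommRing A] [CommRing B] [Algebra ℚ A] [Algebra ℚ B]
    (f : A →ₗ[ℚ] B) : (k : ℕ) → (Fin k → A) → B
  | 0, _ => 1
  | k + 1, a =>
      f (a (Fin.last k)) * frob f k (fun i => a i.castSucc)
        - ∑ i : Fin k, frob f k
            (Function.update (fun j : Fin k => a j.castSucc) i (a i.castSucc * a (Fin.last k)))


/-!
Over a ℚ-algebra, a linear ODE `F' = g·F` in `B⟦X⟧` has at most one solution with a given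
constant term, and `expPS p` solves `F' = p'·F` (the truncation in its definition is harmless
because `p ^ m` is divisible by `X ^ m`). Hence `expPS` turns sums into products, so
`f ↦ R(f, a)` is additive-to-multiplicative; and for a ring homomorphism `g`,
`mapCoeff g (log(1 + aT)) = log(1 + g(a)T)`, whose exponential is `1 + g(a)T` because
`(1 + bT)·(log(1 + bT))' = b`. Writing `f = Σ nα•fα` and moving the negative exponents to the
other side gives the theorem.
-/

namespace PowerSeries

theorem eq_of_derivative_eq_mul {R : Type*} [CommRing R] [IsAddTorsionFree R] {g F G : R⟦X⟧}
    (hF : d⁄dX R F = g * F) (hG : d⁄dX R G = g * G) (h0 : constantCoeff F = constantCoeff G) :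
    F = G := by
  ext k
  induction k using Nat.strong_induction_on with
  | _ k ih =>
    rcases k with _ | k
    · simpa using h0
    have hk : coeff k (d⁄dX R F) = coeff k (d⁄dX R G) := by
      rw [hF, hG, coeff_mul, coeff_mul]
      refine Finset.sum_congr rfl fun ij hij => ?_
      rw [ih ij.2 (Nat.lt_succ_of_le (Finset.HasAntidiagonal.antidiagonal.snd_le hij))]
    rw [coeff_derivative, coeff_derivative, mul_comm, mul_comm _ (_ + 1)] at hk
    exact IsAddTorsionFree.nsmul_right_injective k.succ_ne_zero (by simpa [nsmul_eq_mul] using hk)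

theorem coeff_pow_eq_zero_of_lt {R : Type*} [CommSemiring R] {p : R⟦X⟧}
    (hp : constantCoeff p = 0) {k m : ℕ} (h : k < m) : coeff k (p ^ m) = 0 :=
  X_pow_dvd_iff.mp (pow_dvd_pow_of_dvd (X_dvd_iff.mpr hp) m) k h

end PowerSeries

section Exp

variable {B : Type*} [CommRing B] [Algebra ℚ B]

noncomputable def expPartialSum (p : B⟦X⟧) (N : ℕ) : B⟦X⟧ :=
  ∑ m ∈ Finset.range N, ((m.factorial : ℚ)⁻¹) • p ^ m

theorem X_pow_dvd_expPS_sub_expPartialSum {p : B⟦X⟧} (hp : constantCoeff p = 0) (N : ℕ) :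
    X ^ N ∣ expPS p - expPartialSum p N := by
  refine X_pow_dvd_iff.mpr fun k hk => ?_
  rw [map_sub, sub_eq_zero, expPS, coeff_mk, expPartialSum, map_sum]
  simp only [coeff_smul]
  refine Finset.sum_subset (by simpa using hk) fun m _ hm => ?_
  rw [coeff_pow_eq_zero_of_lt hp (by simpa using hm), smul_zero]

theorem derivative_expPartialSum (p : B⟦X⟧) (N : ℕ) :
    d⁄dX B (expPartialSum p (N + 1)) = d⁄dX B p * expPartialSum p N := by
  rw [expPartialSum, expPartialSum, Finset.sum_range_succ', map_add, map_sum, Finset.mul_sum]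
  simp only [pow_zero, Nat.factorial_zero, Nat.cast_one, inv_one, one_smul, derivative_one, add_zero]
  refine Finset.sum_congr rfl fun m _ => ?_
  have hfac : ((m + 1).factorial : ℚ)⁻¹ * (m + 1 : ℕ) = (m.factorial : ℚ)⁻¹ := by
    rw [Nat.factorial_succ]; push_cast; field_simp
  rw [Derivation.map_smul_of_tower, Derivation.leibniz_pow, Nat.add_sub_cancel, smul_eq_mul,
    ← Nat.cast_smul_eq_nsmul ℚ, smul_smul, hfac, mul_smul_comm, mul_comm]

theorem derivative_expPS {p : B⟦X⟧} (hp : constantCoeff p = 0) :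
    d⁄dX B (expPS p) = d⁄dX B p * expPS p := by
  ext k
  have hcoeff : coeff (k + 1) (expPS p) = coeff (k + 1) (expPartialSum p (k + 2)) := by
    rw [← sub_eq_zero, ← map_sub]
    exact X_pow_dvd_iff.mp (X_pow_dvd_expPS_sub_expPartialSum hp _) _ (Nat.lt_succ_self _)
  have hmul : coeff k (d⁄dX B p * expPS p) = coeff k (d⁄dX B p * expPartialSum p (k + 1)) := by
    rw [← sub_eq_zero, ← map_sub, ← mul_sub]
    exact X_pow_dvd_iff.mp
      (dvd_mul_of_dvd_right (X_pow_dvd_expPS_sub_expPartialSum hp _) _) _ (Nat.lt_succ_self _)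
  rw [coeff_derivative, hcoeff, ← coeff_derivative, derivative_expPartialSum, hmul]

@[simp]
theorem constantCoeff_expPS (p : B⟦X⟧) : constantCoeff (expPS p) = 1 := by
  rw [← coeff_zero_eq_constantCoeff_apply, expPS, coeff_mk]
  simp

theorem expPS_eq_of_derivative_eq_mul {p F : B⟦X⟧} (hp : constantCoeff p = 0)
    (hF : d⁄dX B F = d⁄dX B p * F) (h0 : constantCoeff F = 1) : expPS p = F :=
  have := IsAddTorsionFree.of_module_rat B
  eq_of_derivative_eq_mul (derivative_expPS hp) hF (by rw [constantCoeff_expPS, h0])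

theorem expPS_zero : expPS (0 : B⟦X⟧) = 1 :=
  expPS_eq_of_derivative_eq_mul (map_zero _) (by simp) (map_one _)

theorem expPS_add {p q : B⟦X⟧} (hp : constantCoeff p = 0) (hq : constantCoeff q = 0) :
    expPS (p + q) = expPS p * expPS q := by
  refine expPS_eq_of_derivative_eq_mul (by rw [map_add, hp, hq, add_zero]) ?_ (by simp)
  rw [Derivation.leibniz, smul_eq_mul, smul_eq_mul, derivative_expPS hp, derivative_expPS hq,
    map_add]
  ring

@[simp]
theorem constantCoeff_logOneAdd (b : B) : constantCoeff (logOneAdd b) = 0 := by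
  rw [← coeff_zero_eq_constantCoeff_apply, logOneAdd, coeff_mk]
  simp

theorem coeff_derivative_logOneAdd (b : B) (k : ℕ) :
    coeff k (d⁄dX B (logOneAdd b)) = ((-1 : ℚ) ^ k) • b ^ (k + 1) := by
  have hk : ((k : B) + 1) = algebraMap ℚ B ((k : ℚ) + 1) := by simp
  rw [coeff_derivative, logOneAdd, coeff_mk, hk, mul_comm, ← Algebra.smul_def, smul_smul]
  congr 1
  push_cast
  field_simp
  ring

theorem derivative_logOneAdd_mul (b : B) :
    d⁄dX B (logOneAdd b) * (1 + C b * X) = C b := by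
  ext k
  rw [mul_add, mul_one, map_add, ← mul_assoc]
  rcases k with _ | k
  · simp [coeff_derivative_logOneAdd]
  · rw [coeff_succ_mul_X, coeff_mul_C, coeff_derivative_logOneAdd, coeff_derivative_logOneAdd,
      coeff_C, if_neg k.succ_ne_zero, pow_succ (-1 : ℚ), mul_neg_one, neg_smul, smul_mul_assoc,
      ← pow_succ, neg_add_cancel]

theorem expPS_logOneAdd (b : B) : expPS (logOneAdd b) = 1 + C b * X := by
  refine expPS_eq_of_derivative_eq_mul (constantCoeff_logOneAdd b) ?_ (by simp)
  simp [derivative_logOneAdd_mul]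

end Exp

section CharFun

variable {A B : Type*} [CommRing A] [CommRing B] [Algebra ℚ A] [Algebra ℚ B]

@[simp]
theorem constantCoeff_mapCoeff (f : A →ₗ[ℚ] B) (p : A⟦X⟧) :
    constantCoeff (mapCoeff f p) = f (constantCoeff p) := by
  rw [← coeff_zero_eq_constantCoeff_apply, mapCoeff, coeff_mk, coeff_zero_eq_constantCoeff_apply]

theorem mapCoeff_add (f g : A →ₗ[ℚ] B) (p : A⟦X⟧) :
    mapCoeff (f + g) p = mapCoeff f p + mapCoeff g p := by
  ext k
  simp [mapCoeff]

theorem mapCoeff_ringHom_logOneAdd (g : A →+* B) (a : A) :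
    mapCoeff g.toRatAlgHom.toLinearMap (logOneAdd a) = logOneAdd (g a) := by
  ext k
  simp [mapCoeff, logOneAdd, RingHom.toRatAlgHom]

theorem charFun_zero (a : A) : charFun (0 : A →ₗ[ℚ] B) a = 1 := by
  have h : mapCoeff (0 : A →ₗ[ℚ] B) (logOneAdd a) = 0 := by
    ext k
    simp [mapCoeff]
  rw [charFun, h, expPS_zero]

theorem charFun_add (f g : A →ₗ[ℚ] B) (a : A) :
    charFun (f + g) a = charFun f a * charFun g a := by
  rw [charFun, mapCoeff_add, expPS_add (by simp) (by simp), charFun, charFun]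

theorem charFun_sum {ι : Type*} (s : Finset ι) (g : ι → A →ₗ[ℚ] B) (a : A) :
    charFun (∑ i ∈ s, g i) a = ∏ i ∈ s, charFun (g i) a := by
  classical
  induction s using Finset.induction_on with
  | empty => simpa using charFun_zero a
  | insert i s hi ih => rw [Finset.sum_insert hi, Finset.prod_insert hi, charFun_add, ih]

theorem charFun_nsmul (f : A →ₗ[ℚ] B) (n : ℕ) (a : A) :
    charFun (n • f) a = charFun f a ^ n := by
  simpa using charFun_sum (Finset.range n) (fun _ => f) a

theorem charFun_zsmul_mul_pow (f : A →ₗ[ℚ] B) (z : ℤ) (a : A) :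
    charFun (z • f) a * charFun f a ^ (-z).toNat = charFun f a ^ z.toNat := by
  rw [← charFun_nsmul, ← charFun_nsmul, ← charFun_add, ← natCast_zsmul, ← natCast_zsmul,
    ← add_zsmul]
  congr 2
  omega

theorem charFun_ringHom (g : A →+* B) (a : A) :
    charFun g.toRatAlgHom.toLinearMap a = 1 + C (g a) * X := by
  rw [charFun, mapCoeff_ringHom_logOneAdd, expPS_logOneAdd]

end CharFun

/-- for ring homomorphisms `(f_α)`, integers `(n_α)` indexed by a finite
set, and `f = Σ_α n_α·f_α`, the characteristic function of `f` is the rational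
function `∏_{n_α>0}(1+f_α(a)T)^{n_α} / ∏_{n_α<0}(1+f_α(a)T)^{−n_α}`; precisely,
`R(f,a)·∏_{n_α<0}(1+f_α(a)T)^{−n_α} = ∏_{n_α≥0}(1+f_α(a)T)^{n_α}` in `B[[T]]`. -/
theorem stmt18 {A B : Type*} [CommRing A] [CommRing B] [Algebra ℚ A] [Algebra ℚ B]
    {I : Type*} [Fintype I] (fα : I → (A →+* B)) (nα : I → ℤ)
    (f : A →ₗ[ℚ] B) (hf : f = ∑ α : I, nα α • ((fα α).toRatAlgHom.toLinearMap))
    (a : A) :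
    charFun f a *
        ∏ α ∈ Finset.univ.filter (fun α => nα α < 0),
          (1 + PowerSeries.C (R := B) (fα α a) * PowerSeries.X) ^ (-nα α).toNat =
      ∏ α ∈ Finset.univ.filter (fun α => 0 ≤ nα α),
        (1 + PowerSeries.C (R := B) (fα α a) * PowerSeries.X) ^ (nα α).toNat := by
  have pos_of_pow_toNat_ne_one : ∀ (z : ℤ) (F : B⟦X⟧), F ^ z.toNat ≠ 1 → 0 < z := by
    intro z F h
    contrapose! h
    rw [Int.toNat_of_nonpos h, pow_zero]
  simp_rw [← charFun_ringHom]
  rw [Finset.prod_filter_of_ne fun α _ h => neg_pos.mp (pos_of_pow_toNat_ne_one _ _ h),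
    Finset.prod_filter_of_ne fun α _ h => (pos_of_pow_toNat_ne_one _ _ h).le,
    hf, charFun_sum, ← Finset.prod_mul_distrib]
  exact Finset.prod_congr rfl fun α _ => charFun_zsmul_mul_pow _ _ a
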